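/- Let k be an algebraically closed field of characteristic 0, let r ≥ 2, and let G = ⟨(1/r)(a₁,…,aₙ)⟩ ⊂ SL(n,k) be the finite cyclic subgroup of order r generated by the diagonal matrix g = diag(ξ^{a₁},…,ξ^{aₙ}). For integers n₁, n₂ ≥ 1 with n₁ + n₂ = n, the group G embeds into SL(n₁,k) × SL(n₂,k) if and only if there exists a subset S ⊆ {1,…,n} of cardinality n₁ such that r divides Σ_{i∈S} aᵢ. -/

import Mathlib

/-! Conjugation preserves characteristic polynomials, so if `D = diag(ξ^{a_i})` is conjugate to a
block matrix with blocks `h₁, h₂`, then `χ(h₁) χ(h₂) = ∏ᵢ (X - ξ^{a_i})`. Hence `χ(h₁)` splits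
with roots `ξ^{a_i}`, `i ∈ S`, for some `S` with `|S| = n₁`, and `det h₁ = 1` reads
`ξ^{∑_{i ∈ S} a_i} = 1`, i.e. `r ∣ ∑_{i ∈ S} a_i`. Conversely, the permutation matrix that moves
the coordinates in `S` to the front conjugates every `D^m` into a block diagonal matrix with
blocks of determinants `ξ^{m ∑_{i ∈ S} a_i}` and `ξ^{m ∑_{i ∉ S} a_i}`, both `1` because `r`
divides `∑_{i ∈ S} a_i` and `∑ᵢ a_i`. -/

open Matrix Finset

/-- A subset `G` of the matrices `Matrix (Fin n) (Fin n) k` (thought of as a subgroup of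
`SL(n, k)`) *embeds into* `SL(n₁, k) × SL(n₂, k)` (where `n₁ + n₂ = n`) if there is an
invertible matrix `P` conjugating every element of `G` into a block-diagonal matrix whose
two diagonal blocks have determinant `1`. -/
def EmbedsIntoProdSL (k : Type) [Field k] {n : ℕ} (n₁ n₂ : ℕ) (hn : n₁ + n₂ = n)
    (G : Set (Matrix (Fin n) (Fin n) k)) : Prop :=
  ∃ P : Matrix (Fin n) (Fin n) k, IsUnit P ∧
    ∀ h ∈ G, ∃ (h₁ : Matrix (Fin n₁) (Fin n₁) k) (h₂ : Matrix (Fin n₂) (Fin n₂) k),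
      h₁.det = 1 ∧ h₂.det = 1 ∧
      P * h * P⁻¹ =
        Matrix.reindex (finSumFinEquiv.trans (finCongr hn)) (finSumFinEquiv.trans (finCongr hn))
          (Matrix.fromBlocks h₁ 0 0 h₂)

open Polynomial

theorem Multiset.exists_le_map_eq_of_le_map {α β : Type*} {f : α → β} {s : Multiset β}
    {t : Multiset α} (h : s ≤ t.map f) : ∃ u ≤ t, u.map f = s := by
  induction s using Quotient.inductionOn
  induction t using Quotient.inductionOn
  obtain ⟨l, hperm, hsub⟩ := Multiset.coe_le.mp h
  obtain ⟨l', hsub', rfl⟩ := List.sublist_map_iff.mp hsub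
  exact ⟨l', Multiset.coe_le.mpr hsub'.subperm, Multiset.coe_eq_coe.mpr hperm⟩

theorem Polynomial.exists_subset_roots_eq_map_of_dvd_prod_X_sub_C {R ι : Type*} [CommRing R]
    [IsDomain R] {s : Finset ι} {d : ι → R} {f : R[X]} (hf : f ∣ ∏ i ∈ s, (X - C (d i))) :
    ∃ S ⊆ s, f.roots = S.val.map d := by
  have hroots : (∏ i ∈ s, (X - C (d i))).roots = s.val.map d := by
    rw [← roots_multiset_prod_X_sub_C (s.val.map d), Multiset.map_map]; rfl
  obtain ⟨u, hus, hu⟩ := Multiset.exists_le_map_eq_of_le_map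
    (hroots ▸ roots.le_of_dvd (monic_prod_of_monic _ _ fun i _ => monic_X_sub_C _).ne_zero hf)
  exact ⟨⟨u, Multiset.nodup_of_le hus s.nodup⟩, Multiset.subset_of_le hus, hu.symm⟩

theorem Matrix.exists_card_eq_prod_eq_det_of_conj_diagonal_eq_reindex_fromBlocks
    {K ι m n : Type*} [Field K] [Fintype ι] [DecidableEq ι] [Fintype m] [DecidableEq m]
    [Fintype n] [DecidableEq n] {d : ι → K} {P : Matrix ι ι K} (hP : IsUnit P) (e : m ⊕ n ≃ ι)
    {h₁ : Matrix m m K} {h₂ : Matrix n n K}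
    (h : P * diagonal d * P⁻¹ = reindex e e (fromBlocks h₁ 0 0 h₂)) :
    ∃ S : Finset ι, S.card = Fintype.card m ∧ ∏ i ∈ S, d i = h₁.det := by
  have hcharpoly : h₁.charpoly * h₂.charpoly = ∏ i, (X - C (d i)) :=
    calc h₁.charpoly * h₂.charpoly = (P * diagonal d * P⁻¹).charpoly := by
          rw [h, charpoly_reindex, charpoly_fromBlocks_zero₂₁]
      _ = ∏ i, (X - C (d i)) := by
          rw [← hP.unit_spec, charpoly_units_conj, charpoly_diagonal]
  have hdvd : h₁.charpoly ∣ ∏ i, (X - C (d i)) := hcharpoly ▸ dvd_mul_right _ _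
  have hsplits : h₁.charpoly.Splits :=
    (Splits.prod fun i _ => Splits.X_sub_C (d i)).of_dvd
      (monic_prod_of_monic _ _ fun i _ => monic_X_sub_C (d i)).ne_zero hdvd
  obtain ⟨S, -, hS⟩ := exists_subset_roots_eq_map_of_dvd_prod_X_sub_C hdvd
  refine ⟨S, ?_, ?_⟩
  · rw [← charpoly_natDegree_eq_dim h₁, hsplits.natDegree_eq_card_roots, hS, Multiset.card_map]
    rfl
  · rw [det_eq_prod_roots_charpoly_of_splits hsplits, hS, prod_eq_multiset_prod]

theorem Matrix.inv_permMatrix {ι R : Type*} [Fintype ι] [DecidableEq ι] [CommRing R]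
    (σ : Equiv.Perm ι) : (σ.permMatrix R)⁻¹ = σ⁻¹.permMatrix R :=
  inv_eq_right_inv (by rw [← permMatrix_mul, inv_mul_cancel, permMatrix_one])

theorem Matrix.isUnit_permMatrix {ι R : Type*} [Fintype ι] [DecidableEq ι] [CommRing R]
    (σ : Equiv.Perm ι) : IsUnit (σ.permMatrix R) := by
  rw [isUnit_iff_isUnit_det, det_permutation]
  exact (Equiv.Perm.sign σ).isUnit.map (Int.castRingHom R)

theorem Matrix.permMatrix_mul_mul_inv_permMatrix {ι R : Type*} [Fintype ι] [DecidableEq ι]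
    [CommRing R] (σ : Equiv.Perm ι) (A : Matrix ι ι R) :
    σ.permMatrix R * A * (σ.permMatrix R)⁻¹ = A.submatrix σ σ := by
  rw [inv_permMatrix, PEquiv.toMatrix_toPEquiv_mul, PEquiv.mul_toMatrix_toPEquiv,
    submatrix_submatrix]
  rfl

theorem Matrix.permMatrix_mul_diagonal_mul_inv_eq_reindex_fromBlocks {ι m n R : Type*}
    [Fintype ι] [DecidableEq ι] [DecidableEq m] [DecidableEq n] [CommRing R]
    (e E : m ⊕ n ≃ ι) (d : ι → R) :
    Equiv.Perm.permMatrix R (e.symm.trans E) * diagonal d *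
        (Equiv.Perm.permMatrix R (e.symm.trans E))⁻¹ =
      reindex e e (fromBlocks (diagonal (d ∘ E ∘ Sum.inl)) 0 0 (diagonal (d ∘ E ∘ Sum.inr))) := by
  rw [permMatrix_mul_mul_inv_permMatrix, submatrix_diagonal_equiv, fromBlocks_diagonal,
    reindex_apply, submatrix_diagonal_equiv,
    show Sum.elim (d ∘ E ∘ Sum.inl) (d ∘ E ∘ Sum.inr) = d ∘ E from Sum.elim_comp_inl_inr (d ∘ E)]
  rfl

theorem Finset.exists_sumEquiv_map_inl_eq_and_map_inr_eq_compl {ι m n : Type*} [Fintype ι]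
    [DecidableEq ι] [Fintype m] [Fintype n] (S : Finset ι) (h₁ : S.card = Fintype.card m)
    (h₂ : Sᶜ.card = Fintype.card n) :
    ∃ E : m ⊕ n ≃ ι, univ.map (Function.Embedding.inl.trans E.toEmbedding) = S ∧
      univ.map (Function.Embedding.inr.trans E.toEmbedding) = Sᶜ := by
  let E₁ : m ≃ S := Fintype.equivOfCardEq (by rw [Fintype.card_coe, h₁])
  let E₂ : n ≃ (Sᶜ : Finset ι) := Fintype.equivOfCardEq (by rw [Fintype.card_coe, h₂])
  let E : m ⊕ n ≃ ι :=
    (E₁.sumCongr (E₂.trans (Equiv.subtypeEquivRight fun _ => mem_compl))).trans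
      (Equiv.sumCompl (· ∈ S))
  refine ⟨E, ?_, ?_⟩ <;> ext i
  · simp [E, E₁.exists_congr_left]
  · simp [E, E₂.exists_congr_left]

theorem Matrix.exists_isUnit_forall_conj_diagonal_eq_reindex_fromBlocks {ι m n R : Type*}
    [Fintype ι] [DecidableEq ι] [Fintype m] [DecidableEq m] [Fintype n] [DecidableEq n]
    [CommRing R] (e : m ⊕ n ≃ ι) (S : Finset ι) (hS : S.card = Fintype.card m) :
    ∃ P : Matrix ι ι R, IsUnit P ∧ ∀ d : ι → R,
      ∃ (h₁ : Matrix m m R) (h₂ : Matrix n n R), h₁.det = ∏ i ∈ S, d i ∧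
        h₂.det = ∏ i ∈ Sᶜ, d i ∧ P * diagonal d * P⁻¹ = reindex e e (fromBlocks h₁ 0 0 h₂) := by
  obtain ⟨E, hE₁, hE₂⟩ := S.exists_sumEquiv_map_inl_eq_and_map_inr_eq_compl (n := n) hS (by
    rw [card_compl, hS, ← Fintype.card_congr e, Fintype.card_sum]
    omega)
  refine ⟨_, isUnit_permMatrix (e.symm.trans E), fun d => ⟨_, _, ?_, ?_,
    permMatrix_mul_diagonal_mul_inv_eq_reindex_fromBlocks e E d⟩⟩
  · rw [det_diagonal, ← hE₁, prod_map]
    rfl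
  · rw [det_diagonal, ← hE₂, prod_map]
    rfl

theorem IsPrimitiveRoot.prod_pow_eq_one_iff_dvd_sum {M ι : Type*} [CommMonoid M] {ζ : M}
    {r : ℕ} (hζ : IsPrimitiveRoot ζ r) (s : Finset ι) (a : ι → ℕ) :
    ∏ i ∈ s, ζ ^ a i = 1 ↔ r ∣ ∑ i ∈ s, a i := by
  rw [prod_pow_eq_pow_sum, hζ.pow_eq_one_iff_dvd]

theorem embedsIntoProdSL_iff_exists_subset_card_dvd_sum_general
    (k : Type) [Field k]
    {n : ℕ} {r : ℕ} (ξ : k) (hξ : IsPrimitiveRoot ξ r)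
    (a : Fin n → ℕ)
    (hdet : r ∣ ∑ i, a i)
    (n₁ n₂ : ℕ) (hn : n₁ + n₂ = n) :
    EmbedsIntoProdSL k n₁ n₂ hn
        {A | ∃ m : ℕ, A = (Matrix.diagonal fun i => ξ ^ a i) ^ m} ↔
      ∃ S : Finset (Fin n), S.card = n₁ ∧ r ∣ ∑ i ∈ S, a i := by
  constructor
  · rintro ⟨P, hP, hblocks⟩
    obtain ⟨h₁, h₂, hdet₁, -, hconj⟩ := hblocks _ ⟨1, (pow_one _).symm⟩
    obtain ⟨S, hcard, hprod⟩ :=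
      exists_card_eq_prod_eq_det_of_conj_diagonal_eq_reindex_fromBlocks hP _ hconj
    refine ⟨S, by simpa using hcard, ?_⟩
    rw [← hξ.prod_pow_eq_one_iff_dvd_sum, hprod, hdet₁]
  · rintro ⟨S, hcard, hdvd⟩
    have hdvd_compl : r ∣ ∑ i ∈ Sᶜ, a i :=
      (Nat.dvd_add_right hdvd).1 (sum_add_sum_compl S a ▸ hdet)
    obtain ⟨P, hP, hconj⟩ := exists_isUnit_forall_conj_diagonal_eq_reindex_fromBlocks (R := k)
      (finSumFinEquiv.trans (finCongr hn)) S (by simpa using hcard)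
    refine ⟨P, hP, ?_⟩
    rintro _ ⟨m, rfl⟩
    obtain ⟨h₁, h₂, hdet₁, hdet₂, hblocks⟩ := hconj fun i => (ξ ^ a i) ^ m
    refine ⟨h₁, h₂, ?_, ?_, by rwa [diagonal_pow]⟩
    · rw [hdet₁, prod_pow, (hξ.prod_pow_eq_one_iff_dvd_sum S a).2 hdvd, one_pow]
    · rw [hdet₂, prod_pow, (hξ.prod_pow_eq_one_iff_dvd_sum Sᶜ a).2 hdvd_compl, one_pow]

/-- The cyclic group `G = ⟨(1/r)(a₁, …, aₙ)⟩ < SL(n, k)` embeds into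
`SL(n₁, k) × SL(n₂, k)` (where `n₁, n₂ ≥ 1` and `n₁ + n₂ = n`) if and only if there is a
subset `S ⊆ {1, …, n}` of cardinality `n₁` such that `r` divides `∑_{i ∈ S} aᵢ`. -/
theorem embedsIntoProdSL_iff_exists_subset_card_dvd_sum
    (k : Type) [Field k] [IsAlgClosed k] [CharZero k]
    {n : ℕ} {r : ℕ} (hr : 2 ≤ r) (ξ : k) (hξ : IsPrimitiveRoot ξ r)
    (a : Fin n → ℕ)
    (hdet : r ∣ ∑ i, a i)
    (horder : Nat.gcd r (Finset.univ.gcd a) = 1)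
    (n₁ n₂ : ℕ) (hn₁ : 1 ≤ n₁) (hn₂ : 1 ≤ n₂) (hn : n₁ + n₂ = n) :
    EmbedsIntoProdSL k n₁ n₂ hn
        {A | ∃ m : ℕ, A = (Matrix.diagonal fun i => ξ ^ a i) ^ m} ↔
      ∃ S : Finset (Fin n), S.card = n₁ ∧ r ∣ ∑ i ∈ S, a i :=
  embedsIntoProdSL_iff_exists_subset_card_dvd_sum_general k ξ hξ a hdet n₁ n₂ hn
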